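/- Bound on the expected running maximum of the discrete energy for the MEC scheme with multiplicative noise: under the uniform-mesh stochastic setup and the MEC scheme hypotheses, with Δx ∈ (0,1), one has E( max_{0 ≤ m ≤ M} H_dis[u^m] ) ≤ H_dis[u^0] + (√3/2)·ε·M_dis[u^0]·√(2·ln(2(N+1)))·t_M / ((Δt)^{3/2}·√Δx). -/

import Mathlib

/-!
Testing the scheme against the midpoint `u^{m+1/2}` and against the increment `u^{m+1} - u^m`
shows that each step conserves the discrete mass and changes the discrete energy by
`-(εΔx/2) Σ_j f̃_j (|u^{m+1}_j|² - |u^m_j|²)`, which is at most `ε M_dis[u^0] max_j |f̃_j|`.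
Hence, pathwise, `max_m H_dis[u^m] ≤ H_dis[u^0] + ε M_dis[u^0] Σ_m max_j |f̃^{m+1/2}_j|`.
The expected maximum of `N + 1` standard Gaussians in absolute value is at most
`√(2 ln (2(N+1)))`: by Jensen, `exp (t E max_j |χ_j|) ≤ E exp (t max_j |χ_j|) ≤ 2(N+1) e^{t²/2}`,
and one optimises in `t`.
-/

open MeasureTheory ProbabilityTheory Finset

/-- Neumann extension of a vector `u ∈ ℂ^{N+1}`: `u_{-1} := u_0`, `u_{N+1} := u_N`. -/
noncomputable def neumannExt (N : ℕ) (u : ℕ → ℂ) (j : ℤ) : ℂ :=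
  if j ≤ 0 then u 0
  else if (N : ℤ) ≤ j then u N
  else u j.toNat

/-- Discrete mass on a uniform mesh: `M_dis[u] = Δx·Σ_{j=0}^{N} |u_j|²`. -/
noncomputable def MdisU (N : ℕ) (Δx : ℝ) (u : ℕ → ℂ) : ℝ :=
  Δx * ∑ j ∈ Finset.range (N + 1), ‖u j‖ ^ 2

/-- Discrete energy on a uniform mesh:
`H_dis[u] = (Δx/2)·Σ_{j=0}^{N} |u_{j+1}-u_j|²/(Δx)² - (Δx/(2(σ+1)))·Σ_{j=0}^{N} |u_j|^{2(σ+1)}`,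
the value `u_{N+1}` being given by the Neumann convention. -/
noncomputable def HdisU (N : ℕ) (Δx : ℝ) (σ : ℕ) (u : ℕ → ℂ) : ℝ :=
  (Δx / 2) * ∑ j ∈ Finset.range (N + 1), ‖neumannExt N u ((j : ℤ) + 1) - u j‖ ^ 2 / Δx ^ 2
    - (Δx / (2 * ((σ : ℝ) + 1))) * ∑ j ∈ Finset.range (N + 1), ‖u j‖ ^ (2 * (σ + 1))

open Real ComplexConjugate
open scoped NNReal

section Neumann

variable {N : ℕ}

lemma neumannExt_natCast (u : ℕ → ℂ) {j : ℕ} (hj : j ≤ N) : neumannExt N u j = u j := by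
  unfold neumannExt
  split_ifs
  · rw [show j = 0 by omega]
  · rw [show j = N by omega]
  · simp

lemma neumannExt_of_nonpos (u : ℕ → ℂ) {z : ℤ} (hz : z ≤ 0) : neumannExt N u z = u 0 :=
  if_pos hz

lemma neumannExt_natCast_add_one (u : ℕ → ℂ) {j : ℕ} (hj : j < N) :
    neumannExt N u ((j : ℤ) + 1) = u (j + 1) := by
  exact_mod_cast neumannExt_natCast u (Nat.succ_le_of_lt hj)

lemma neumannExt_last_add_one (u : ℕ → ℂ) : neumannExt N u ((N : ℤ) + 1) = u N := by
  unfold neumannExt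
  rw [if_neg (by omega), if_pos (by omega)]

lemma neumannExt_map₂ (g : ℂ → ℂ → ℂ) (p q : ℕ → ℂ) (z : ℤ) :
    neumannExt N (fun k => g (p k) (q k)) z = g (neumannExt N p z) (neumannExt N q z) := by
  unfold neumannExt; split_ifs <;> rfl

variable (N) in
noncomputable def neumannDiff (u : ℕ → ℂ) (j : ℕ) : ℂ := neumannExt N u ((j : ℤ) + 1) - u j

variable (N) in
noncomputable def neumannLap (u : ℕ → ℂ) (j : ℕ) : ℂ :=
  neumannExt N u ((j : ℤ) - 1) - 2 * neumannExt N u j + neumannExt N u ((j : ℤ) + 1)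

lemma neumannDiff_of_lt (u : ℕ → ℂ) {j : ℕ} (hj : j < N) :
    neumannDiff N u j = u (j + 1) - u j := by
  rw [neumannDiff, neumannExt_natCast_add_one u hj]

lemma neumannDiff_last (u : ℕ → ℂ) : neumannDiff N u N = 0 := by
  rw [neumannDiff, neumannExt_last_add_one, sub_self]

lemma neumannDiff_midpoint (w w' : ℕ → ℂ) (j : ℕ) :
    neumannDiff N (fun k => (w k + w' k) / 2) j = (neumannDiff N w j + neumannDiff N w' j) / 2 := by
  simp only [neumannDiff, neumannExt_map₂ (fun x y => (x + y) / 2)]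
  ring

lemma neumannDiff_sub (w w' : ℕ → ℂ) (j : ℕ) :
    neumannDiff N (fun k => w' k - w k) j = neumannDiff N w' j - neumannDiff N w j := by
  simp only [neumannDiff, neumannExt_map₂ (fun x y => x - y)]
  ring

/-- Summation by parts: the Neumann convention kills both boundary terms. -/
lemma sum_neumannLap_mul_conj (a b : ℕ → ℂ) :
    ∑ j ∈ range (N + 1), neumannLap N a j * conj (b j)
      = -∑ j ∈ range (N + 1), neumannDiff N a j * conj (neumannDiff N b j) := by
  have hsplit : ∀ j ∈ range (N + 1), neumannLap N a j * conj (b j)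
      = neumannDiff N a j * conj (b j) - (a j - neumannExt N a ((j : ℤ) - 1)) * conj (b j) := by
    intro j hj
    rw [neumannLap, neumannDiff, neumannExt_natCast a (Nat.lt_succ_iff.mp (mem_range.mp hj))]
    ring
  have hshift : ∑ j ∈ range (N + 1), (a j - neumannExt N a ((j : ℤ) - 1)) * conj (b j)
      = ∑ j ∈ range N, neumannDiff N a j * conj (b (j + 1)) := by
    rw [sum_range_succ', Nat.cast_zero, zero_sub, neumannExt_of_nonpos a (by norm_num), sub_self,
      zero_mul, add_zero]
    refine sum_congr rfl fun j hj => ?_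
    rw [Nat.cast_succ, add_sub_cancel_right, neumannExt_natCast a (mem_range.mp hj).le,
      neumannDiff_of_lt a (mem_range.mp hj)]
  rw [sum_congr rfl hsplit, sum_sub_distrib, hshift, sum_range_succ, sum_range_succ,
    neumannDiff_last, zero_mul, zero_mul, add_zero, add_zero, ← sum_sub_distrib,
    ← sum_neg_distrib]
  refine sum_congr rfl fun j hj => ?_
  rw [neumannDiff_of_lt b (mem_range.mp hj), map_sub]
  ring

end Neumann

lemma neg_sum_mul_sub_le {ι : Type*} (s : Finset ι) {f x y : ι → ℝ} {F : ℝ}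
    (hf : ∀ j ∈ s, |f j| ≤ F) (hx : ∀ j ∈ s, 0 ≤ x j) (hy : ∀ j ∈ s, 0 ≤ y j) :
    -∑ j ∈ s, f j * (x j - y j) ≤ F * (∑ j ∈ s, x j + ∑ j ∈ s, y j) := by
  rw [← sum_add_distrib, mul_sum, ← sum_neg_distrib]
  refine sum_le_sum fun j hj => ?_
  have hxy : |x j - y j| ≤ x j + y j := by
    simpa [abs_of_nonneg (hx j hj), abs_of_nonneg (hy j hj)] using abs_sub (x j) (y j)
  calc -(f j * (x j - y j)) ≤ |f j| * |x j - y j| := by rw [← abs_mul]; exact neg_le_abs _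
    _ ≤ F * (x j + y j) := mul_le_mul (hf j hj) hxy (abs_nonneg _) ((abs_nonneg _).trans (hf j hj))

lemma im_I_mul_sub_mul_conj_midpoint (z z' : ℂ) :
    (Complex.I * (z' - z) * conj ((z + z') / 2)).im = (‖z'‖ ^ 2 - ‖z‖ ^ 2) / 2 := by
  simp only [Complex.sq_norm, Complex.normSq_apply, Complex.mul_im, Complex.mul_re,
    Complex.I_re, Complex.I_im, Complex.sub_re, Complex.sub_im, Complex.conj_re, Complex.conj_im,
    Complex.div_ofNat_re, Complex.div_ofNat_im, Complex.add_re, Complex.add_im]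
  ring

lemma re_midpoint_mul_conj_sub (z z' : ℂ) :
    ((z + z') / 2 * conj (z' - z)).re = (‖z'‖ ^ 2 - ‖z‖ ^ 2) / 2 := by
  simp only [Complex.sq_norm, Complex.normSq_apply, Complex.mul_re, Complex.sub_re,
    Complex.sub_im, Complex.conj_re, Complex.conj_im, Complex.div_ofNat_re, Complex.div_ofNat_im,
    Complex.add_re, Complex.add_im]
  ring

lemma im_mul_conj (z : ℂ) : (z * conj z).im = 0 := by
  rw [Complex.mul_conj, Complex.ofReal_im]

lemma re_I_mul_mul_conj (z : ℂ) : (Complex.I * z * conj z).re = 0 := by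
  rw [mul_assoc, Complex.mul_conj, Complex.re_mul_ofReal, Complex.I_re, zero_mul]

section Scheme

variable {N σ : ℕ} {Δx Δt ε : ℝ} {w w' : ℕ → ℂ} {V f : ℕ → ℝ}

variable (N σ Δx Δt ε) in
/-- One step `u^m ↦ u^{m+1}` of the MEC scheme, with potential `V = V^m` and noise
`f = f̃^{m+1/2}`. -/
def IsMECStep (w w' : ℕ → ℂ) (V f : ℕ → ℝ) : Prop :=
  ∀ j ≤ N,
    V j * (‖w' j‖ ^ 2 - ‖w j‖ ^ 2)
        = (1 / ((σ : ℝ) + 1)) * (‖w' j‖ ^ (2 * (σ + 1)) - ‖w j‖ ^ (2 * (σ + 1))) ∧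
      Complex.I * (w' j - w j) / (Δt : ℂ)
          + neumannLap N (fun k => (w k + w' k) / 2) j / (Δx : ℂ) ^ 2
          + (V j : ℂ) * ((w j + w' j) / 2)
        = (ε : ℂ) * (f j : ℂ) * ((w j + w' j) / 2)

/-- The scheme tested against `b`: with `b = (w + w') / 2` its imaginary part gives conservation
of mass, with `b = w' - w` its real part gives the energy identity. -/
lemma IsMECStep.sum_mul_conj (h : IsMECStep N σ Δx Δt ε w w' V f) (b : ℕ → ℂ) :
    (∑ j ∈ range (N + 1), Complex.I * (w' j - w j) * conj (b j)) / (Δt : ℂ)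
        - (∑ j ∈ range (N + 1),
            neumannDiff N (fun k => (w k + w' k) / 2) j * conj (neumannDiff N b j))
          / (Δx : ℂ) ^ 2
        + ∑ j ∈ range (N + 1), (V j : ℂ) * ((w j + w' j) / 2 * conj (b j))
      = (ε : ℂ) * ∑ j ∈ range (N + 1), (f j : ℂ) * ((w j + w' j) / 2 * conj (b j)) := by
  rw [sub_eq_add_neg, ← neg_div, ← sum_neumannLap_mul_conj, sum_div, sum_div, mul_sum,
    ← sum_add_distrib, ← sum_add_distrib]
  refine sum_congr rfl fun j hj => ?_
  have := congrArg (· * conj (b j)) (h j (Nat.lt_succ_iff.mp (mem_range.mp hj))).2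
  linear_combination this

lemma IsMECStep.sum_sq_norm_eq (h : IsMECStep N σ Δx Δt ε w w' V f) (hΔt : Δt ≠ 0) :
    ∑ j ∈ range (N + 1), ‖w' j‖ ^ 2 = ∑ j ∈ range (N + 1), ‖w j‖ ^ 2 := by
  have him := congrArg Complex.im (h.sum_mul_conj fun k => (w k + w' k) / 2)
  simp only [← Complex.ofReal_pow, Complex.add_im, Complex.sub_im, Complex.div_ofReal_im,
    Complex.im_sum, Complex.im_ofReal_mul, im_I_mul_sub_mul_conj_midpoint, im_mul_conj,
    sum_const_zero, zero_div, sub_zero, mul_zero, add_zero] at him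
  rw [← sum_div, div_div] at him
  rw [← sub_eq_zero, ← sum_sub_distrib]
  exact (div_eq_zero_iff.mp him).resolve_right (mul_ne_zero two_ne_zero hΔt)

lemma HdisU_eq_neumannDiff (Δx : ℝ) (σ : ℕ) (u : ℕ → ℂ) :
    HdisU N Δx σ u = Δx / 2 * ((∑ j ∈ range (N + 1), ‖neumannDiff N u j‖ ^ 2) / Δx ^ 2)
      - Δx / (2 * ((σ : ℝ) + 1)) * ∑ j ∈ range (N + 1), ‖u j‖ ^ (2 * (σ + 1)) := by
  rw [HdisU, sum_div]
  rfl

lemma IsMECStep.HdisU_eq (h : IsMECStep N σ Δx Δt ε w w' V f) (hΔx : Δx ≠ 0) :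
    HdisU N Δx σ w'
      = HdisU N Δx σ w - ε * Δx / 2 * ∑ j ∈ range (N + 1), f j * (‖w' j‖ ^ 2 - ‖w j‖ ^ 2) := by
  have hre := congrArg Complex.re (h.sum_mul_conj fun k => w' k - w k)
  simp only [neumannDiff_midpoint, neumannDiff_sub, ← Complex.ofReal_pow, Complex.add_re,
    Complex.sub_re, Complex.div_ofReal_re, Complex.re_sum, Complex.re_ofReal_mul,
    re_I_mul_mul_conj, re_midpoint_mul_conj_sub, sum_const_zero, zero_div, zero_sub] at hre
  have hV : ∑ j ∈ range (N + 1), V j * ((‖w' j‖ ^ 2 - ‖w j‖ ^ 2) / 2)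
      = (1 / ((σ : ℝ) + 1)) * ∑ j ∈ range (N + 1),
          (‖w' j‖ ^ (2 * (σ + 1)) - ‖w j‖ ^ (2 * (σ + 1))) / 2 := by
    rw [mul_sum]
    refine sum_congr rfl fun j hj => ?_
    linear_combination (h j (Nat.lt_succ_iff.mp (mem_range.mp hj))).1 / 2
  have hf : ∑ j ∈ range (N + 1), f j * ((‖w' j‖ ^ 2 - ‖w j‖ ^ 2) / 2)
      = (∑ j ∈ range (N + 1), f j * (‖w' j‖ ^ 2 - ‖w j‖ ^ 2)) / 2 := by
    rw [sum_div]
    exact sum_congr rfl fun _ _ => (mul_div_assoc _ _ _).symm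
  rw [hV, hf] at hre
  simp only [← sum_div, sum_sub_distrib] at hre
  rw [HdisU_eq_neumannDiff, HdisU_eq_neumannDiff]
  field_simp at hre ⊢
  linear_combination -hre

lemma IsMECStep.MdisU_eq (h : IsMECStep N σ Δx Δt ε w w' V f) (hΔt : Δt ≠ 0) :
    MdisU N Δx w' = MdisU N Δx w := by
  rw [MdisU, MdisU, h.sum_sq_norm_eq hΔt]

lemma IsMECStep.HdisU_le (h : IsMECStep N σ Δx Δt ε w w' V f) (hΔx : 0 < Δx) (hΔt : Δt ≠ 0)
    (hε : 0 ≤ ε) {F : ℝ} (hF : ∀ j ≤ N, |f j| ≤ F) :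
    HdisU N Δx σ w' ≤ HdisU N Δx σ w + ε * MdisU N Δx w * F := by
  have hbound := neg_sum_mul_sub_le (range (N + 1)) (f := f) (x := fun j => ‖w' j‖ ^ 2)
    (y := fun j => ‖w j‖ ^ 2) (fun j hj => hF j (Nat.lt_succ_iff.mp (mem_range.mp hj)))
    (fun _ _ => by positivity) (fun _ _ => by positivity)
  rw [h.sum_sq_norm_eq hΔt] at hbound
  have := mul_le_mul_of_nonneg_left hbound (by positivity : 0 ≤ ε * Δx / 2)
  rw [h.HdisU_eq hΔx.ne', MdisU]
  linarith

end Scheme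

lemma MdisU_nonneg (N : ℕ) {Δx : ℝ} (hΔx : 0 ≤ Δx) (u : ℕ → ℂ) : 0 ≤ MdisU N Δx u :=
  mul_nonneg hΔx (sum_nonneg fun _ _ => by positivity)

section Trajectory

variable {N M σ : ℕ} {Δx Δt ε : ℝ} {w : ℕ → ℕ → ℂ} {V f : ℕ → ℕ → ℝ}

lemma MdisU_eq_of_isMECStep (hΔt : Δt ≠ 0)
    (hstep : ∀ m < M, IsMECStep N σ Δx Δt ε (w m) (w (m + 1)) (V m) (f m)) :
    ∀ m ≤ M, MdisU N Δx (w m) = MdisU N Δx (w 0) := by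
  intro m hm
  induction m with
  | zero => rfl
  | succ m ih => rw [(hstep m hm).MdisU_eq hΔt, ih (by omega)]

lemma HdisU_le_of_isMECStep (hΔx : 0 < Δx) (hΔt : Δt ≠ 0) (hε : 0 ≤ ε)
    (hstep : ∀ m < M, IsMECStep N σ Δx Δt ε (w m) (w (m + 1)) (V m) (f m))
    {F : ℕ → ℝ} (hF : ∀ m < M, ∀ j ≤ N, |f m j| ≤ F m) :
    ∀ m ≤ M, HdisU N Δx σ (w m)
      ≤ HdisU N Δx σ (w 0) + ε * MdisU N Δx (w 0) * ∑ k ∈ range m, F k := by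
  intro m hm
  induction m with
  | zero => simp
  | succ m ih =>
    have hstep_le := (hstep m hm).HdisU_le hΔx hΔt hε (hF m hm)
    rw [MdisU_eq_of_isMECStep hΔt hstep m (by omega)] at hstep_le
    rw [sum_range_succ]
    linarith [ih (by omega)]

lemma sup'_HdisU_le_of_isMECStep (hΔx : 0 < Δx) (hΔt : Δt ≠ 0) (hε : 0 ≤ ε)
    (hstep : ∀ m < M, IsMECStep N σ Δx Δt ε (w m) (w (m + 1)) (V m) (f m))
    {F : ℕ → ℝ} (hF : ∀ m < M, ∀ j ≤ N, |f m j| ≤ F m) :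
    (range (M + 1)).sup' nonempty_range_add_one (fun m => HdisU N Δx σ (w m))
      ≤ HdisU N Δx σ (w 0) + ε * MdisU N Δx (w 0) * ∑ k ∈ range M, F k := by
  have hF0 : ∀ k ∈ range M, 0 ≤ F k :=
    fun k hk => (abs_nonneg _).trans (hF k (mem_range.mp hk) 0 N.zero_le)
  have hM0 := MdisU_nonneg N hΔx.le (w 0)
  refine sup'_le _ _ fun m hm => (HdisU_le_of_isMECStep hΔx hΔt hε hstep hF m
    (Nat.lt_succ_iff.mp (mem_range.mp hm))).trans ?_
  gcongr
  · exact fun k hk _ => hF0 k hk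
  · exact Nat.lt_succ_iff.mp (mem_range.mp hm)

end Trajectory

lemma exp_mul_abs_le_add (t x : ℝ) : exp (t * |x|) ≤ exp (t * x) + exp (-t * x) := by
  rcases abs_choice x with h | h <;> rw [h]
  · linarith [exp_pos (-t * x)]
  · rw [mul_neg, ← neg_mul]
    linarith [exp_pos (t * x)]

namespace ProbabilityTheory

variable {Ω : Type*} [MeasurableSpace Ω] {P : Measure Ω}

lemma HasSubgaussianMGF.of_map_eq_gaussianReal [IsProbabilityMeasure P] {X : Ω → ℝ} {v : ℝ≥0}
    (hX : P.map X = gaussianReal 0 v) : HasSubgaussianMGF X v P where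
  integrable_exp_mul t := mgf_pos_iff.mp (by rw [mgf_gaussianReal hX]; exact exp_pos _)
  mgf_le t := by rw [mgf_gaussianReal hX, zero_mul, zero_add]

variable {ι : Type*} {s : Finset ι} {X : ι → Ω → ℝ} {c : ℝ≥0}

lemma aemeasurable_sup'_abs (hs : s.Nonempty) (hX : ∀ j ∈ s, AEMeasurable (X j) P) :
    AEMeasurable (fun ω => s.sup' hs fun j => |X j ω|) P := by
  have := Finset.sup'_induction hs (fun j ω => |X j ω|) (p := (AEMeasurable · P))
    (fun _ h₁ _ h₂ => h₁.sup h₂) fun j hj => (hX j hj).abs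
  convert this using 1
  ext ω
  simp only [Finset.sup'_apply]

lemma integrable_sup'_abs (hs : s.Nonempty) (hX : ∀ j ∈ s, HasSubgaussianMGF (X j) c P) :
    Integrable (fun ω => s.sup' hs fun j => |X j ω|) P := by
  refine (integrable_finsetSum s fun j hj => (hX j hj).integrable.abs).mono'
    (aemeasurable_sup'_abs hs fun j hj => (hX j hj).aemeasurable).aestronglyMeasurable
    (ae_of_all _ fun ω => ?_)
  obtain ⟨j₀, hj₀, hsup⟩ := Finset.exists_mem_eq_sup' hs fun j => |X j ω|
  rw [hsup, Real.norm_eq_abs, abs_abs]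
  exact single_le_sum (f := fun j => |X j ω|) (fun _ _ => abs_nonneg _) hj₀

lemma mul_integral_sup'_abs_le [IsProbabilityMeasure P] (hs : s.Nonempty)
    (hX : ∀ j ∈ s, HasSubgaussianMGF (X j) c P) (t : ℝ) :
    t * ∫ ω, s.sup' hs (fun j => |X j ω|) ∂P ≤ log (2 * #s) + c * t ^ 2 / 2 := by
  set Y := fun ω => s.sup' hs fun j => |X j ω|
  have hexp_le : ∀ ω, exp (t * Y ω) ≤ ∑ j ∈ s, (exp (t * X j ω) + exp (-t * X j ω)) := by
    intro ω
    obtain ⟨j₀, hj₀, hsup⟩ := Finset.exists_mem_eq_sup' hs fun j => |X j ω|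
    simp only [Y, hsup]
    exact (exp_mul_abs_le_add t _).trans
      (single_le_sum (f := fun j => exp (t * X j ω) + exp (-t * X j ω))
        (fun _ _ => by positivity) hj₀)
  have hsum_int : Integrable (fun ω => ∑ j ∈ s, (exp (t * X j ω) + exp (-t * X j ω))) P :=
    integrable_finsetSum s fun j hj =>
      ((hX j hj).integrable_exp_mul t).add ((hX j hj).integrable_exp_mul (-t))
  have hY_meas : AEMeasurable Y P := aemeasurable_sup'_abs hs fun j hj => (hX j hj).aemeasurable
  have hexp_int : Integrable (fun ω => exp (t * Y ω)) P :=
    hsum_int.mono' (measurable_exp.comp_aemeasurable (hY_meas.const_mul t)).aestronglyMeasurable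
      (ae_of_all _ fun ω => by rw [Real.norm_eq_abs, abs_of_pos (exp_pos _)]; exact hexp_le ω)
  have hmgf_sum : ∫ ω, ∑ j ∈ s, (exp (t * X j ω) + exp (-t * X j ω)) ∂P
      ≤ 2 * #s * exp (c * t ^ 2 / 2) := by
    rw [integral_finsetSum (f := fun j ω => exp (t * X j ω) + exp (-t * X j ω)) s fun j hj =>
      ((hX j hj).integrable_exp_mul t).add ((hX j hj).integrable_exp_mul (-t))]
    calc ∑ j ∈ s, ∫ ω, (exp (t * X j ω) + exp (-t * X j ω)) ∂P
        = ∑ j ∈ s, (mgf (X j) P t + mgf (X j) P (-t)) :=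
          sum_congr rfl fun j hj =>
            integral_add ((hX j hj).integrable_exp_mul t) ((hX j hj).integrable_exp_mul (-t))
      _ ≤ ∑ _j ∈ s, 2 * exp (c * t ^ 2 / 2) := sum_le_sum fun j hj => by
          have h₁ := (hX j hj).mgf_le t
          have h₂ := (hX j hj).mgf_le (-t)
          rw [neg_sq] at h₂
          linarith
      _ = 2 * #s * exp (c * t ^ 2 / 2) := by rw [sum_const, nsmul_eq_mul]; ring
  have hjensen : exp (∫ ω, t * Y ω ∂P) ≤ ∫ ω, exp (t * Y ω) ∂P :=
    convexOn_exp.map_integral_le continuous_exp.continuousOn isClosed_univ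
      (ae_of_all _ fun _ => Set.mem_univ _) ((integrable_sup'_abs hs hX).const_mul t) hexp_int
  have hcard : (0 : ℝ) < 2 * #s := by have := hs.card_pos; positivity
  rw [← integral_const_mul, ← exp_le_exp, exp_add, exp_log hcard]
  exact hjensen.trans ((integral_mono hexp_int hsum_int hexp_le).trans hmgf_sum)

lemma integral_sup'_abs_le [IsProbabilityMeasure P] (hs : s.Nonempty)
    (hX : ∀ j ∈ s, HasSubgaussianMGF (X j) c P) (hc : 0 < c) :
    ∫ ω, s.sup' hs (fun j => |X j ω|) ∂P ≤ √(2 * c * log (2 * #s)) := by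
  have hlog : 0 < log (2 * #s) := log_pos (by have := hs.card_pos; norm_cast; omega)
  have hc' : (0 : ℝ) < c := hc
  set t := √(2 * log (2 * #s) / c)
  have ht : 0 < t := sqrt_pos.mpr (by positivity)
  have hbound := mul_integral_sup'_abs_le hs hX t
  have ht2 : c * t ^ 2 / 2 = log (2 * #s) := by
    rw [sq_sqrt (by positivity)]; field_simp
  have hprod : t * √(2 * c * log (2 * #s)) = 2 * log (2 * #s) := by
    rw [← sqrt_mul (by positivity), show 2 * log (2 * #s) / c * (2 * c * log (2 * #s))
      = (2 * log (2 * #s)) ^ 2 by field_simp, sqrt_sq (by positivity)]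
  refine le_of_mul_le_mul_left ?_ ht
  linarith

lemma integral_sum_sup'_abs_le_of_gaussian [IsProbabilityMeasure P] {M N : ℕ}
    {χ : ℕ → ℕ → Ω → ℝ} (hχ : ∀ m < M, ∀ j ≤ N, P.map (χ m j) = gaussianReal 0 1) :
    Integrable (fun ω => ∑ k ∈ range M,
        (range (N + 1)).sup' nonempty_range_add_one fun j => |χ k j ω|) P ∧
      ∫ ω, ∑ k ∈ range M, (range (N + 1)).sup' nonempty_range_add_one (fun j => |χ k j ω|) ∂P
        ≤ M * √(2 * log (2 * ((N : ℝ) + 1))) := by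
  have hsub : ∀ k ∈ range M, ∀ j ∈ range (N + 1), HasSubgaussianMGF (χ k j) 1 P :=
    fun k hk j hj => .of_map_eq_gaussianReal
      (hχ k (mem_range.mp hk) j (Nat.lt_succ_iff.mp (mem_range.mp hj)))
  have hint := fun k hk => integrable_sup'_abs nonempty_range_add_one (hsub k hk)
  refine ⟨integrable_finsetSum _ hint, ?_⟩
  rw [integral_finsetSum _ hint]
  simpa using sum_le_card_nsmul _ _ _ fun k hk =>
    integral_sup'_abs_le nonempty_range_add_one (hsub k hk) one_pos

end ProbabilityTheory

section Expectation

variable {Ω : Type*} [MeasurableSpace Ω]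

lemma measurable_neumannExt {N : ℕ} {v : ℕ → Ω → ℂ} (hv : ∀ j ≤ N, Measurable (v j)) (z : ℤ) :
    Measurable fun ω => neumannExt N (fun k => v k ω) z := by
  unfold neumannExt
  split_ifs <;> exact hv _ (by omega)

lemma measurable_HdisU {N : ℕ} (Δx : ℝ) (σ : ℕ) {v : ℕ → Ω → ℂ}
    (hv : ∀ j ≤ N, Measurable (v j)) : Measurable fun ω => HdisU N Δx σ (fun j => v j ω) := by
  have hext := measurable_neumannExt hv
  unfold HdisU
  refine .sub (.const_mul (Finset.measurable_sum _ fun j hj => ?_) _)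
    (.const_mul (Finset.measurable_sum _ fun j hj => ?_) _) <;>
  · have := hv j (Nat.lt_succ_iff.mp (mem_range.mp hj))
    fun_prop

lemma integral_le_const_add_mul_integral {P : Measure Ω} [IsProbabilityMeasure P] {Y G : Ω → ℝ}
    {a c : ℝ} (hY : AEStronglyMeasurable Y P) (hG : Integrable G P)
    (hlow : ∀ᵐ ω ∂P, a ≤ Y ω) (hup : ∀ᵐ ω ∂P, Y ω ≤ a + c * G ω) :
    ∫ ω, Y ω ∂P ≤ a + c * ∫ ω, G ω ∂P := by
  have hup_int : Integrable (fun ω => a + c * G ω) P := (integrable_const a).add (hG.const_mul c)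
  have hY_int := integrable_of_le_of_le hY hlow hup (integrable_const a) hup_int
  calc ∫ ω, Y ω ∂P ≤ ∫ ω, (a + c * G ω) ∂P := integral_mono_ae hY_int hup_int hup
    _ = a + c * ∫ ω, G ω ∂P := by
      rw [integral_add (integrable_const a) (hG.const_mul c), integral_const, integral_const_mul]
      simp

end Expectation

lemma inv_sqrt_mul_eq_div_rpow {a : ℝ} (ha : 0 < a) (b : ℝ) :
    (√(a * b))⁻¹ = a / (a ^ ((3 : ℝ) / 2) * √b) := by
  rw [show (3 : ℝ) / 2 = 1 + 1 / 2 by norm_num, rpow_add ha, rpow_one, ← sqrt_eq_rpow,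
    sqrt_mul ha.le, mul_assoc, div_mul_cancel_left₀ ha.ne']

theorem mec_multiplicative_expected_max_energy_bound_general
    {Ω : Type*} [MeasurableSpace Ω] (P : Measure Ω) [IsProbabilityMeasure P]
    (N M : ℕ)
    (Δx Δt : ℝ) (hΔx : 0 < Δx) (hΔt : 0 < Δt)
    (ε : ℝ) (hε : 0 ≤ ε) (σ : ℕ)
    (u : ℕ → ℕ → Ω → ℂ) (u0 : ℕ → ℂ) (hu0 : ∀ j ω, u 0 j ω = u0 j)
    (humeas : ∀ m ≤ M, ∀ j ≤ N, Measurable (u m j))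
    (χ : ℕ → ℕ → Ω → ℝ)
    -- each of which is a standard Gaussian
    (hχgauss : ∀ m < M, ∀ j ≤ N, Measure.map (χ m j) P = gaussianReal 0 1)
    (V : ℕ → ℕ → Ω → ℝ)
    -- MEC scheme hypotheses, almost surely
    (hscheme : ∀ᵐ ω ∂P, ∀ m < M, ∀ j ≤ N,
      (V m j ω * (‖u (m + 1) j ω‖ ^ 2 - ‖u m j ω‖ ^ 2)
          = (1 / ((σ : ℝ) + 1))
            * (‖u (m + 1) j ω‖ ^ (2 * (σ + 1)) - ‖u m j ω‖ ^ (2 * (σ + 1)))) ∧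
      (Complex.I * (u (m + 1) j ω - u m j ω) / (Δt : ℂ)
          + (neumannExt N (fun k => (u m k ω + u (m + 1) k ω) / 2) ((j : ℤ) - 1)
              - 2 * neumannExt N (fun k => (u m k ω + u (m + 1) k ω) / 2) (j : ℤ)
              + neumannExt N (fun k => (u m k ω + u (m + 1) k ω) / 2) ((j : ℤ) + 1))
            / (Δx : ℂ) ^ 2
          + (V m j ω : ℂ) * ((u m j ω + u (m + 1) j ω) / 2)
        = (ε : ℂ) * ((Real.sqrt 3 / 2 * χ m j ω / Real.sqrt (Δt * Δx) : ℝ) : ℂ)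
            * ((u m j ω + u (m + 1) j ω) / 2))) :
    (∫ ω, (Finset.range (M + 1)).sup' Finset.nonempty_range_add_one
        (fun m => HdisU N Δx σ (fun j => u m j ω)) ∂P)
      ≤ HdisU N Δx σ u0
        + (Real.sqrt 3 / 2) * ε * MdisU N Δx u0
          * Real.sqrt (2 * Real.log (2 * ((N : ℝ) + 1)))
          * ((M : ℝ) * Δt) / (Δt ^ ((3 : ℝ) / 2) * Real.sqrt Δx) := by
  set q := √3 / 2 / √(Δt * Δx) with hq_def
  set G : Ω → ℝ := fun ω => ∑ k ∈ range M,
    (range (N + 1)).sup' nonempty_range_add_one fun j => |χ k j ω|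
  obtain ⟨hG_int, hG_le⟩ := integral_sum_sup'_abs_le_of_gaussian hχgauss
  have hnoise : ∀ ω m j, j ≤ N → |√3 / 2 * χ m j ω / √(Δt * Δx)|
      ≤ q * (range (N + 1)).sup' nonempty_range_add_one fun j => |χ m j ω| := by
    intro ω m j hj
    rw [show √3 / 2 * χ m j ω / √(Δt * Δx) = q * χ m j ω by ring, abs_mul,
      abs_of_nonneg (by positivity)]
    exact mul_le_mul_of_nonneg_left (le_sup' (fun j => |χ m j ω|) (mem_range.mpr (by omega)))
      (by positivity)
  have hup : ∀ᵐ ω ∂P, (range (M + 1)).sup' nonempty_range_add_one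
      (fun m => HdisU N Δx σ (fun j => u m j ω))
        ≤ HdisU N Δx σ u0 + ε * MdisU N Δx u0 * q * G ω := by
    filter_upwards [hscheme] with ω hω
    simpa only [hu0, G, mul_sum, mul_assoc] using sup'_HdisU_le_of_isMECStep
      (w := fun m j => u m j ω) hΔx hΔt.ne' hε hω fun m _ j hj => hnoise ω m j hj
  have hlow : ∀ ω, HdisU N Δx σ u0 ≤ (range (M + 1)).sup' nonempty_range_add_one
      (fun m => HdisU N Δx σ (fun j => u m j ω)) := fun ω => by
    simpa only [hu0] using
      le_sup' (fun m => HdisU N Δx σ (fun j => u m j ω)) (mem_range.mpr M.succ_pos)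
  calc _ ≤ HdisU N Δx σ u0 + ε * MdisU N Δx u0 * q * ∫ ω, G ω ∂P :=
        integral_le_const_add_mul_integral (Finset.measurable_range_sup'' fun m hm =>
          measurable_HdisU Δx σ (humeas m hm)).aestronglyMeasurable hG_int (ae_of_all _ hlow) hup
    _ ≤ HdisU N Δx σ u0 + ε * MdisU N Δx u0 * q * (M * √(2 * log (2 * ((N : ℝ) + 1)))) := by
        have := MdisU_nonneg N hΔx.le u0
        gcongr
    _ = _ := by
        rw [hq_def, div_eq_mul_inv (√3 / 2), inv_sqrt_mul_eq_div_rpow hΔt]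
        ring

/-- Bound on the expected running maximum of the discrete energy for the MEC scheme with
multiplicative noise:
`E(max_{0≤m≤M} H_dis[u^m]) ≤ H_dis[u^0] + (√3/2)·ε·M_dis[u^0]·√(2 ln(2(N+1)))·t_M/((Δt)^{3/2}·√Δx)`. -/
theorem mec_multiplicative_expected_max_energy_bound
    {Ω : Type*} [MeasurableSpace Ω] (P : Measure Ω) [IsProbabilityMeasure P]
    (N M : ℕ) (hN : 1 ≤ N) (hM : 1 ≤ M)
    (Δx Δt : ℝ) (hΔx : 0 < Δx) (hΔx1 : Δx < 1) (hΔt : 0 < Δt)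
    (ε : ℝ) (hε : 0 ≤ ε) (σ : ℕ) (hσ : 1 ≤ σ)
    (u : ℕ → ℕ → Ω → ℂ) (u0 : ℕ → ℂ) (hu0 : ∀ j ω, u 0 j ω = u0 j)
    (humeas : ∀ m ≤ M, ∀ j ≤ N, Measurable (u m j))
    (χ : ℕ → ℕ → Ω → ℝ)
    (hχmeas : ∀ m < M, ∀ j ≤ N, Measurable (χ m j))
    -- the whole family of noises is made of independent random variables
    (hχindep : iIndepFun
      (fun p : Fin M × Fin (N + 1) => χ (p.1 : ℕ) (p.2 : ℕ)) P)
    -- each of which is a standard Gaussian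
    (hχgauss : ∀ m < M, ∀ j ≤ N, Measure.map (χ m j) P = gaussianReal 0 1)
    -- for each m, the noises at step m are independent of (u^0, …, u^m)
    (hχpast : ∀ m < M,
      Indep (⨆ j ∈ Finset.range (N + 1), MeasurableSpace.comap (χ m j) inferInstance)
        (⨆ k ∈ Finset.range (m + 1), ⨆ j ∈ Finset.range (N + 1),
          MeasurableSpace.comap (u k j) inferInstance) P)
    (V : ℕ → ℕ → Ω → ℝ)
    -- MEC scheme hypotheses, almost surely
    (hscheme : ∀ᵐ ω ∂P, ∀ m < M, ∀ j ≤ N,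
      (V m j ω * (‖u (m + 1) j ω‖ ^ 2 - ‖u m j ω‖ ^ 2)
          = (1 / ((σ : ℝ) + 1))
            * (‖u (m + 1) j ω‖ ^ (2 * (σ + 1)) - ‖u m j ω‖ ^ (2 * (σ + 1)))) ∧
      (Complex.I * (u (m + 1) j ω - u m j ω) / (Δt : ℂ)
          + (neumannExt N (fun k => (u m k ω + u (m + 1) k ω) / 2) ((j : ℤ) - 1)
              - 2 * neumannExt N (fun k => (u m k ω + u (m + 1) k ω) / 2) (j : ℤ)
              + neumannExt N (fun k => (u m k ω + u (m + 1) k ω) / 2) ((j : ℤ) + 1))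
            / (Δx : ℂ) ^ 2
          + (V m j ω : ℂ) * ((u m j ω + u (m + 1) j ω) / 2)
        = (ε : ℂ) * ((Real.sqrt 3 / 2 * χ m j ω / Real.sqrt (Δt * Δx) : ℝ) : ℂ)
            * ((u m j ω + u (m + 1) j ω) / 2))) :
    (∫ ω, (Finset.range (M + 1)).sup' Finset.nonempty_range_add_one
        (fun m => HdisU N Δx σ (fun j => u m j ω)) ∂P)
      ≤ HdisU N Δx σ u0
        + (Real.sqrt 3 / 2) * ε * MdisU N Δx u0
          * Real.sqrt (2 * Real.log (2 * ((N : ℝ) + 1)))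
          * ((M : ℝ) * Δt) / (Δt ^ ((3 : ℝ) / 2) * Real.sqrt Δx) :=
  mec_multiplicative_expected_max_energy_bound_general P N M Δx Δt hΔx hΔt ε hε σ u u0 hu0 humeas χ
    hχgauss V hscheme
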